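/- Stability of the Volterra integro-differential system (Theorem 3): Let A : [0,∞) → ℝ^{n×n} and B : {(t,τ): 0 ≤ τ ≤ t} → ℝ^{n×n} be continuous, and suppose Λ(A(t)) + ∫₀ᵗ ‖B(t, s)‖ ds < 0 for all t ≥ 0. Then the trivial solution of X'(t) = A(t)X(t) + ∫₀ᵗ B(t, τ)X(τ) dτ is stable: for every ε > 0 there exists δ > 0 such that every solution with ‖X(0)‖ ≤ δ satisfies ‖X(t)‖ ≤ ε for all t ≥ 0. -/

import Mathlib

open scoped Topology
open Filter Set

noncomputable def logNorm {E : Type*} [NormedAddCommGroup E] [NormedSpace ℝ E]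
    (K : E →L[ℝ] E) : ℝ :=
  sInf ((fun h : ℝ => (‖ContinuousLinearMap.id ℝ E + h • K‖ - 1) / h) '' Set.Ioi 0)

noncomputable def matNorm {n : ℕ} (A : Matrix (Fin n) (Fin n) ℝ) : ℝ :=
  ‖LinearMap.toContinuousLinearMap A.mulVecLin‖

noncomputable def matLogNorm {n : ℕ} (A : Matrix (Fin n) (Fin n) ℝ) : ℝ :=
  logNorm (LinearMap.toContinuousLinearMap A.mulVecLin)

/-!
Take `δ = ε`: in fact `‖X t‖ ≤ ‖X 0‖` for all `t ≥ 0`. Otherwise let `T > 0` be the first time at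
which `‖X‖` reaches a value above `‖X 0‖`. On `[0, T]` we have `‖X‖ ≤ ‖X T‖`, so the memory term `V`
at `T` has norm at most `(∫₀ᵀ ‖B(T, s)‖ ds) ‖X T‖`. Writing `X(T - h) = (I - h A(T)) X(T) - h V + o(h)`
and using `‖(I - h A) v‖ ≥ (1 - h μ) ‖v‖ - o(h)` for any `μ > Λ(A)`, the hypothesis
`Λ(A(T)) + ∫₀ᵀ ‖B(T, s)‖ ds < 0` gives `‖X(T - h)‖ > ‖X T‖` for small `h > 0`, contradicting
the choice of `T`.
-/

section LogNorm

variable {E : Type*} [NormedAddCommGroup E] [NormedSpace ℝ E]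

/-- `h ↦ ‖id + h • K‖` is convex with value at most `1` at `h = 0`, so once the difference
quotient defining `logNorm K` is below `μ`, it stays below `μ` for smaller `h`. -/
lemma logNorm_eventually_norm_id_add_smul_le (K : E →L[ℝ] E) {μ : ℝ} (hμ : logNorm K < μ) :
    ∀ᶠ h in 𝓝[>] (0 : ℝ), ‖ContinuousLinearMap.id ℝ E + h • K‖ ≤ 1 + h * μ := by
  obtain ⟨_, ⟨h₀, hh₀ : 0 < h₀, rfl⟩, hquot⟩ :=
    exists_lt_of_csInf_lt ((nonempty_Ioi (a := (0 : ℝ))).image _) hμ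
  have hh₀μ : ‖ContinuousLinearMap.id ℝ E + h₀ • K‖ ≤ 1 + h₀ * μ := by
    rw [div_lt_iff₀ hh₀] at hquot
    linarith
  filter_upwards [Ioc_mem_nhdsGT hh₀] with h ⟨hh, hhh₀⟩
  set t := h / h₀
  have ht : 0 ≤ t := div_nonneg hh.le hh₀.le
  have ht1 : 0 ≤ 1 - t := sub_nonneg.2 ((div_le_one hh₀).2 hhh₀)
  have hconv : ContinuousLinearMap.id ℝ E + h • K
      = (1 - t) • ContinuousLinearMap.id ℝ E + t • (ContinuousLinearMap.id ℝ E + h₀ • K) := by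
    rw [smul_add, smul_smul, div_mul_cancel₀ h hh₀.ne', sub_smul, one_smul]
    abel
  calc ‖ContinuousLinearMap.id ℝ E + h • K‖
      ≤ (1 - t) * ‖ContinuousLinearMap.id ℝ E‖ + t * ‖ContinuousLinearMap.id ℝ E + h₀ • K‖ := by
        rw [hconv]
        refine (norm_add_le _ _).trans_eq ?_
        rw [norm_smul, norm_smul, Real.norm_of_nonneg ht, Real.norm_of_nonneg ht1]
    _ ≤ (1 - t) * 1 + t * (1 + h₀ * μ) := by
        gcongr
        exact ContinuousLinearMap.norm_id_le
    _ = 1 + h * μ := by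
        simp only [t]
        field_simp
        ring

/-- `v = (id + h • K) (v - h • K v) + h² • K (K v)`. -/
lemma logNorm_eventually_mul_norm_le_norm_sub_smul (K : E →L[ℝ] E) (v : E) {μ β : ℝ}
    (hμ : logNorm K < μ) (hβ : 0 < β) :
    ∀ᶠ h in 𝓝[>] (0 : ℝ), (1 - h * μ) * ‖v‖ ≤ ‖v - h • K v‖ + β * h := by
  have hsmall : ∀ᶠ h in 𝓝 (0 : ℝ), h * ‖K (K v)‖ < β / 2 ∧ 1 / 2 < 1 + h * μ := by
    refine (ContinuousAt.eventually_lt (by fun_prop) continuousAt_const ?_).and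
      (ContinuousAt.eventually_lt continuousAt_const (by fun_prop) ?_) <;> norm_num [hβ]
  filter_upwards [logNorm_eventually_norm_id_add_smul_le K hμ, nhdsWithin_le_nhds hsmall,
    self_mem_nhdsWithin] with h hK ⟨hC, hμh⟩ (hh : 0 < h)
  have hdecomp : v = (ContinuousLinearMap.id ℝ E + h • K) (v - h • K v) + (h * h) • K (K v) := by
    simp only [add_apply, ContinuousLinearMap.id_apply, smul_apply, map_sub, map_smul]
    module
  have hv : ‖v‖ ≤ (1 + h * μ) * ‖v - h • K v‖ + h * (h * ‖K (K v)‖) := by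
    calc ‖v‖ ≤ ‖ContinuousLinearMap.id ℝ E + h • K‖ * ‖v - h • K v‖ + (h * h) * ‖K (K v)‖ := by
          conv_lhs => rw [hdecomp]
          refine (norm_add_le _ _).trans (add_le_add (ContinuousLinearMap.le_opNorm _ _) ?_)
          rw [norm_smul, Real.norm_of_nonneg (by positivity)]
      _ ≤ (1 + h * μ) * ‖v - h • K v‖ + h * (h * ‖K (K v)‖) := by
          rw [← mul_assoc]
          gcongr
  refine le_of_mul_le_mul_left ?_ (by linarith : 0 < 1 + h * μ)
  nlinarith [mul_le_mul_of_nonneg_left hC.le hh.le, mul_lt_mul_of_pos_right hμh (mul_pos hβ hh),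
    mul_nonneg (sq_nonneg (h * μ)) (norm_nonneg v)]

lemma eventually_norm_lt_norm_sub_of_hasDerivAt {X : ℝ → E} {K : E →L[ℝ] E} {V : E} {I T : ℝ}
    (hX : HasDerivAt X (K (X T) + V) T) (hV : ‖V‖ ≤ I * ‖X T‖) (hKI : logNorm K + I < 0)
    (hXT : X T ≠ 0) :
    ∀ᶠ h in 𝓝[>] (0 : ℝ), ‖X T‖ < ‖X (T - h)‖ := by
  set v := X T
  obtain ⟨μ, hKμ, hμI⟩ := exists_between (by linarith : logNorm K < -I)
  -- a third of the margin `-(μ + I) ‖v‖` for each of the two `o(h)` errors, a third left over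
  set β := -(μ + I) * ‖v‖ / 3 with hβ_def
  have hβ : 0 < β := by
    have := norm_pos_iff.2 hXT
    have : 0 < -(μ + I) := by linarith
    positivity
  have htaylor : ∀ᶠ h in 𝓝[>] (0 : ℝ), ‖X (T - h) - (v - h • (K v + V))‖ ≤ β * h := by
    have hlittleO := (hasDerivAt_iff_isLittleO_nhds_zero.1
      ((sub_zero T).symm ▸ hX : HasDerivAt X (K v + V) (T - 0)).comp_const_sub).def hβ
    filter_upwards [nhdsWithin_le_nhds hlittleO, self_mem_nhdsWithin] with h hh (hpos : 0 < h)
    simp only [zero_add, sub_zero, Real.norm_of_nonneg hpos.le] at hh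
    convert hh using 2
    module
  filter_upwards [logNorm_eventually_mul_norm_le_norm_sub_smul K v hKμ hβ, htaylor,
    self_mem_nhdsWithin] with h hback hderiv (hh : 0 < h)
  have htri : ‖v - h • K v‖ ≤ ‖X (T - h)‖ + ‖X (T - h) - (v - h • (K v + V))‖ + h * ‖V‖ := by
    calc ‖v - h • K v‖ = ‖X (T - h) - (X (T - h) - (v - h • (K v + V))) + h • V‖ := by
          congr 1
          module
      _ ≤ _ := by
          refine (norm_add_le _ _).trans (add_le_add (norm_sub_le _ _) ?_)
          rw [norm_smul, Real.norm_of_nonneg hh.le]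
  have hhV := mul_le_mul_of_nonneg_left hV hh.le
  have hsplit : h * μ * ‖v‖ + h * (I * ‖v‖) = -3 * (β * h) := by
    rw [hβ_def]
    ring
  nlinarith [mul_pos hβ hh]

end LogNorm

open MeasureTheory

/-- `T` is the first time in `[a, t]` at which `f` reaches `f t`. -/
lemma ContinuousOn.exists_mem_Ioc_forall_Ico_lt {f : ℝ → ℝ} {a t : ℝ}
    (hf : ContinuousOn f (Icc a t)) (hat : a ≤ t) (hft : f a < f t) :
    ∃ T ∈ Ioc a t, ∀ s ∈ Ico a T, f s < f T := by
  have hcompact : IsCompact (Icc a t ∩ f ⁻¹' Ici (f t)) :=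
    isCompact_Icc.of_isClosed_subset (hf.preimage_isClosed_of_isClosed isClosed_Icc isClosed_Ici)
      inter_subset_left
  obtain ⟨T, ⟨⟨haT, hTt⟩, hfT : f t ≤ f T⟩, hleast⟩ :=
    hcompact.exists_isLeast ⟨t, ⟨hat, le_rfl⟩, le_refl (f t)⟩
  have haT' : a < T := haT.lt_of_ne fun h => (h ▸ hfT).not_gt hft
  refine ⟨T, ⟨haT', hTt⟩, fun s ⟨has, hsT⟩ => ?_⟩
  by_contra! hs
  exact hsT.not_ge (hleast ⟨⟨has, hsT.le.trans hTt⟩, hfT.trans hs⟩)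

lemma Matrix.norm_mulVec_le_matNorm_mul {n : ℕ} (M : Matrix (Fin n) (Fin n) ℝ) (v : Fin n → ℝ) :
    ‖M.mulVec v‖ ≤ matNorm M * ‖v‖ :=
  (LinearMap.toContinuousLinearMap M.mulVecLin).le_opNorm v

lemma continuous_matNorm {n : ℕ} : Continuous (matNorm (n := n)) :=
  continuous_norm.comp (Matrix.toLin'.trans LinearMap.toContinuousLinearMap :
    Matrix (Fin n) (Fin n) ℝ ≃ₗ[ℝ] _).toLinearMap.continuous_of_finiteDimensional

lemma norm_integral_mulVec_le {n : ℕ} {M : ℝ → Matrix (Fin n) (Fin n) ℝ} {x : ℝ → Fin n → ℝ}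
    {a b c : ℝ} (hab : a ≤ b) (hM : IntervalIntegrable (fun τ => matNorm (M τ)) volume a b)
    (hx : ∀ τ ∈ Ioc a b, ‖x τ‖ ≤ c) :
    ‖∫ τ in a..b, (M τ).mulVec (x τ)‖ ≤ (∫ τ in a..b, matNorm (M τ)) * c := by
  rw [← intervalIntegral.integral_mul_const]
  refine intervalIntegral.norm_integral_le_of_norm_le hab (ae_of_all _ fun τ hτ => ?_)
    (hM.mul_const c)
  exact (M τ).norm_mulVec_le_matNorm_mul (x τ) |>.trans
    (mul_le_mul_of_nonneg_left (hx τ hτ) (norm_nonneg _))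

theorem volterra_integrodifferential_stability_general {n : ℕ}
    (A : ℝ → Matrix (Fin n) (Fin n) ℝ)
    (B : ℝ → ℝ → Matrix (Fin n) (Fin n) ℝ)
    (hB : ContinuousOn (fun p : ℝ × ℝ => B p.1 p.2) {p : ℝ × ℝ | 0 ≤ p.2 ∧ p.2 ≤ p.1})
    (hcond : ∀ t : ℝ, 0 ≤ t →
      matLogNorm (A t) + (∫ s in (0 : ℝ)..t, matNorm (B t s)) < 0) :
    ∀ ε > (0 : ℝ), ∃ δ > (0 : ℝ), ∀ X : ℝ → (Fin n → ℝ),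
      (∀ t : ℝ, 0 ≤ t →
        HasDerivAt X ((A t).mulVec (X t) + ∫ τ in (0 : ℝ)..t, (B t τ).mulVec (X τ)) t) →
      ‖X 0‖ ≤ δ → ∀ t : ℝ, 0 ≤ t → ‖X t‖ ≤ ε := by
  refine fun ε hε => ⟨ε, hε, fun X hX hX0 t ht => ?_⟩
  suffices ‖X t‖ ≤ ‖X 0‖ by linarith
  by_contra! hgrow
  have hXcont : ContinuousOn (fun s => ‖X s‖) (Icc 0 t) :=
    fun s hs => (hX s hs.1).continuousAt.norm.continuousWithinAt
  obtain ⟨T, ⟨hT, -⟩, hfirst⟩ := hXcont.exists_mem_Ioc_forall_Ico_lt ht hgrow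
  have hBT : IntervalIntegrable (fun τ => matNorm (B T τ)) volume 0 T := by
    refine ContinuousOn.intervalIntegrable ?_
    rw [uIcc_of_le hT.le]
    exact continuous_matNorm.comp_continuousOn
      (hB.comp (f := fun τ => (T, τ)) (by fun_prop) fun τ hτ => ⟨hτ.1, hτ.2⟩)
  have hV := norm_integral_mulVec_le hT.le hBT fun τ hτ =>
    (eq_or_lt_of_le hτ.2).elim (fun h => h ▸ le_rfl) fun h => (hfirst τ ⟨hτ.1.le, h⟩).le
  have hXT : X T ≠ 0 := norm_pos_iff.1 ((norm_nonneg _).trans_lt (hfirst 0 ⟨le_rfl, hT⟩))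
  obtain ⟨h, hbefore, hh, hhT⟩ := ((eventually_norm_lt_norm_sub_of_hasDerivAt (hX T hT.le) hV
    (hcond T hT.le) hXT).and (Ioo_mem_nhdsGT hT : ∀ᶠ h in 𝓝[>] (0 : ℝ), h ∈ Ioo 0 T)).exists
  exact (hfirst (T - h) ⟨by linarith, by linarith⟩).not_gt hbefore

/-- Stability of the trivial solution of the Volterra integro-differential system
`X'(t) = A(t) X(t) + ∫₀ᵗ B(t, τ) X(τ) dτ` (Theorem 3): if
`Λ(A(t)) + ∫₀ᵗ ‖B(t, s)‖ ds < 0` for all `t ≥ 0`, then for every `ε > 0` there is `δ > 0`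
such that every solution with `‖X(0)‖ ≤ δ` satisfies `‖X(t)‖ ≤ ε` for all `t ≥ 0`. -/
theorem volterra_integrodifferential_stability {n : ℕ}
    (A : ℝ → Matrix (Fin n) (Fin n) ℝ) (hA : ContinuousOn A (Set.Ici 0))
    (B : ℝ → ℝ → Matrix (Fin n) (Fin n) ℝ)
    (hB : ContinuousOn (fun p : ℝ × ℝ => B p.1 p.2) {p : ℝ × ℝ | 0 ≤ p.2 ∧ p.2 ≤ p.1})
    (hcond : ∀ t : ℝ, 0 ≤ t →
      matLogNorm (A t) + (∫ s in (0 : ℝ)..t, matNorm (B t s)) < 0) :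
    ∀ ε > (0 : ℝ), ∃ δ > (0 : ℝ), ∀ X : ℝ → (Fin n → ℝ),
      (∀ t : ℝ, 0 ≤ t →
        HasDerivAt X ((A t).mulVec (X t) + ∫ τ in (0 : ℝ)..t, (B t τ).mulVec (X τ)) t) →
      ‖X 0‖ ≤ δ → ∀ t : ℝ, 0 ≤ t → ‖X t‖ ≤ ε :=
  volterra_integrodifferential_stability_general A B hB hcond
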